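/- arXiv:2306.07360 — 6 statements merged into one kernel-verified Lean document; each statement's English description precedes it below -/
import Mathlib

section
/- Let L be a complete modular lattice and let ε : L → L be a linear morphism with kernel ker_ε such that ε ∘ ε = ε. Then ε coincides with the projection onto ε(⊤) along ker_ε; explicitly, ε(a) = (a ⊔ ker_ε) ⊓ ε(⊤) for all a ∈ L. -/
section Preamble

variable {α β : Type*}

/-- A linear morphism between complete lattices: there is a kernel element `k` such that
`φ x = φ (x ⊔ k)` for all `x`, and `φ` restricts to an isomorphism of (complete) lattices
from the interval `[k, ⊤]` onto `[⊥, φ ⊤]`. -/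
def IsLinMor [CompleteLattice α] [CompleteLattice β] (φ : α → β) : Prop :=
  ∃ k : α, (∀ x, φ x = φ (x ⊔ k)) ∧
    ∃ e : Set.Icc k (⊤ : α) ≃o Set.Icc (⊥ : β) (φ ⊤),
      ∀ x : Set.Icc k (⊤ : α), (e x : β) = φ (x : α)

/-- The kernel of a linear morphism: the largest element sent to `⊥`. -/
noncomputable def linKer [CompleteLattice α] [CompleteLattice β] (φ : α → β) : α :=
  sSup {a | φ a = ⊥}

/-- A submonoid with zero of the monoid of linear endomorphisms of `α`. -/
structure IsLinSubmonoid [CompleteLattice α] (M : Set (α → α)) : Prop where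
  lin_mem : ∀ φ ∈ M, IsLinMor φ
  id_mem : (id : α → α) ∈ M
  zero_mem : (fun _ : α => (⊥ : α)) ∈ M
  comp_mem : ∀ φ ∈ M, ∀ ψ ∈ M, φ ∘ ψ ∈ M

/-- The projection onto `x` along a complement `x'`. -/
def proj [CompleteLattice α] (x x' : α) : α → α := fun a => (a ⊔ x') ⊓ x

/-- `M` is closed under complements: whenever `φ ∈ M` restricts to a linear isomorphism
`[⊥, x] → [⊥, y]` with `x, y` complemented, the composite `ι_x ∘ (φ|_x)⁻¹ ∘ π_y` is in `M`. -/
def ClosedUnderComplements [CompleteLattice α] (M : Set (α → α)) : Prop :=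
  ∀ φ ∈ M, ∀ x x' y y' : α, IsCompl x x' → IsCompl y y' →
    ∀ e : Set.Icc (⊥ : α) x ≃o Set.Icc (⊥ : α) y,
      (∀ a : Set.Icc (⊥ : α) x, ((e a : Set.Icc (⊥ : α) y) : α) = φ (a : α)) →
      (fun a : α =>
        ((e.symm ⟨(a ⊔ y') ⊓ y, bot_le, inf_le_right⟩ : Set.Icc (⊥ : α) x) : α)) ∈ M

/-- `L` is `M`-endoregular: `M` is a regular monoid. -/
def MEndoregular [CompleteLattice α] (M : Set (α → α)) : Prop :=
  ∀ φ ∈ M, ∃ ψ ∈ M, φ ∘ ψ ∘ φ = φ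

/-- `L` is `M`-Rickart: kernels of members of `M` have complements. -/
def MRickart [CompleteLattice α] (M : Set (α → α)) : Prop :=
  ∀ φ ∈ M, ∃ y, IsCompl (linKer φ) y

/-- `L` is dual-`M`-Rickart: images of members of `M` have complements. -/
def MDualRickart [CompleteLattice α] (M : Set (α → α)) : Prop :=
  ∀ φ ∈ M, ∃ y, IsCompl (φ ⊤) y

/-- The `M`-C2 condition. -/
def MC2 [CompleteLattice α] (M : Set (α → α)) : Prop :=
  ∀ a x x' : α, IsCompl x x' →
    ∀ e : Set.Icc (⊥ : α) x ≃o Set.Icc (⊥ : α) a,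
      ((fun b : α =>
          ((e ⟨(b ⊔ x') ⊓ x, bot_le, inf_le_right⟩ : Set.Icc (⊥ : α) a) : α)) ∈ M) →
      ∃ a', IsCompl a a'

/-- The `M`-D2 condition. -/
def MD2 [CompleteLattice α] (M : Set (α → α)) : Prop :=
  ∀ a x : α, (∃ x', IsCompl x x') →
    ∀ e : Set.Icc a (⊤ : α) ≃o Set.Icc (⊥ : α) x,
      ((fun b : α => ((e ⟨a ⊔ b, le_sup_left, le_top⟩ : Set.Icc (⊥ : α) x) : α)) ∈ M) →
      ∃ a', IsCompl a a'

/-- `L` is `M`-abelian: every idempotent of `M` is central in `M`. -/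
def MAbelian [CompleteLattice α] (M : Set (α → α)) : Prop :=
  ∀ ε ∈ M, ε ∘ ε = ε → ∀ φ ∈ M, ε ∘ φ = φ ∘ ε

/-- `a` is `M`-`L`-generated: it is a join of images of linear morphisms `L → [⊥, a]`
whose composites with the inclusion `ι_a` lie in `M`. -/
def MGenerated [CompleteLattice α] (M : Set (α → α)) (a : α) : Prop :=
  ∃ S : Set (α → α), S ⊆ M ∧ (∀ f ∈ S, ∀ x, f x ≤ a) ∧ (⨆ f ∈ S, f ⊤) = a

/-- A complete lattice is compact if every join representation of `⊤` has a finite subjoin. -/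
def CompactLat (α : Type*) [CompleteLattice α] : Prop :=
  ∀ s : Set α, sSup s = ⊤ → ∃ t : Finset α, ↑t ⊆ s ∧ sSup (↑t : Set α) = ⊤

/-- An element `c` is compact if the interval `[⊥, c]` is a compact lattice. -/
def CompactElt [CompleteLattice α] (c : α) : Prop :=
  ∀ s : Set α, (∀ a ∈ s, a ≤ c) → sSup s = c →
    ∃ t : Finset α, ↑t ⊆ s ∧ sSup (↑t : Set α) = c

/-- `x` is essential in `L`. -/
def Essential [CompleteLattice α] (x : α) : Prop := ∀ y, x ⊓ y = ⊥ → y = ⊥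

/-- `x` is essential in the interval `[⊥, c]`. -/
def EssentialIn [CompleteLattice α] (x c : α) : Prop :=
  x ≤ c ∧ ∀ y ≤ c, x ⊓ y = ⊥ → y = ⊥

/-- `x` is superfluous in `L`. -/
def Superfluous [CompleteLattice α] (x : α) : Prop := ∀ y, x ⊔ y = ⊤ → y = ⊤

/-- `x` is superfluous in the interval `[⊥, c]`. -/
def SuperfluousIn [CompleteLattice α] (x c : α) : Prop :=
  x ≤ c ∧ ∀ y ≤ c, x ⊔ y = c → y = c

/-- `M` contains all the projections. -/
def ContainsProjections [CompleteLattice α] (M : Set (α → α)) : Prop :=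
  ∀ x x' : α, IsCompl x x' → proj x x' ∈ M

/-- `L` is `M`-K-extending. -/
def MKExtending [CompleteLattice α] (M : Set (α → α)) : Prop :=
  ∀ φ ∈ M, ∃ c : α, (∃ c', IsCompl c c') ∧ EssentialIn (linKer φ) c

/-- `L` is `M`-K-nonsingular. -/
def MKNonsingular [CompleteLattice α] (M : Set (α → α)) : Prop :=
  ∀ φ ∈ M, Essential (linKer φ) → φ = fun _ => (⊥ : α)

/-- `L` is `M`-T-lifting. -/
def MTLifting [CompleteLattice α] (M : Set (α → α)) : Prop :=
  ∀ φ ∈ M, ∃ c c' : α, IsCompl c c' ∧ c ≤ φ ⊤ ∧ SuperfluousIn (φ ⊤ ⊓ c') c'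

end Preamble

/-! Restricted to `[k, ⊤]`, `ε` is an order isomorphism onto `[⊥, ε ⊤]`. Idempotence therefore
forces `ε a ⊔ k = a ⊔ k`, giving `ε a ≤ (a ⊔ k) ⊓ ε ⊤`, and makes `ε` fix every `b ≤ ε ⊤`; applied to
`b = (a ⊔ k) ⊓ ε ⊤`, whose join with `k` lies below `a ⊔ k`, this gives the reverse inequality. -/

namespace LinMor

variable {α β : Type*} [CompleteLattice α] [CompleteLattice β] {φ : α → β} {k : α}

theorem apply_eq_orderIso (hk : ∀ x, φ x = φ (x ⊔ k))
    (e : Set.Icc k (⊤ : α) ≃o Set.Icc (⊥ : β) (φ ⊤)) (he : ∀ x, (e x : β) = φ x) (x : α) :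
    φ x = e ⟨x ⊔ k, le_sup_right, le_top⟩ := by
  rw [he, hk]

theorem apply_le_apply_iff (hk : ∀ x, φ x = φ (x ⊔ k))
    (e : Set.Icc k (⊤ : α) ≃o Set.Icc (⊥ : β) (φ ⊤)) (he : ∀ x, (e x : β) = φ x) (x y : α) :
    φ x ≤ φ y ↔ x ⊔ k ≤ y ⊔ k := by
  rw [apply_eq_orderIso hk e he x, apply_eq_orderIso hk e he y, Subtype.coe_le_coe,
    e.le_iff_le]
  rfl

theorem apply_le_apply_top (hk : ∀ x, φ x = φ (x ⊔ k))
    (e : Set.Icc k (⊤ : α) ≃o Set.Icc (⊥ : β) (φ ⊤)) (he : ∀ x, (e x : β) = φ x) (x : α) :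
    φ x ≤ φ ⊤ :=
  apply_eq_orderIso hk e he x ▸ (e _).2.2

theorem exists_apply_eq_of_le_apply_top (e : Set.Icc k (⊤ : α) ≃o Set.Icc (⊥ : β) (φ ⊤))
    (he : ∀ x, (e x : β) = φ x) {b : β} (hb : b ≤ φ ⊤) : ∃ x, φ x = b := by
  obtain ⟨x, hx⟩ := e.surjective ⟨b, bot_le, hb⟩
  exact ⟨x, by rw [← he, hx]⟩

variable {ε : α → α}

theorem sup_eq_of_idempotent (hk : ∀ x, ε x = ε (x ⊔ k))
    (e : Set.Icc k (⊤ : α) ≃o Set.Icc (⊥ : α) (ε ⊤)) (he : ∀ x, (e x : α) = ε x)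
    (hidem : ε ∘ ε = ε) (a : α) : ε a ⊔ k = a ⊔ k := by
  have h : ε (ε a) = ε a := congrFun hidem a
  exact le_antisymm ((apply_le_apply_iff hk e he _ _).1 h.le)
    ((apply_le_apply_iff hk e he _ _).1 h.ge)

theorem apply_eq_self_of_le_apply_top (e : Set.Icc k (⊤ : α) ≃o Set.Icc (⊥ : α) (ε ⊤))
    (he : ∀ x, (e x : α) = ε x) (hidem : ε ∘ ε = ε) {b : α} (hb : b ≤ ε ⊤) : ε b = b := by
  obtain ⟨x, rfl⟩ := exists_apply_eq_of_le_apply_top e he hb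
  exact congrFun hidem x

end LinMor

theorem stmt_0_general {α : Type*} [CompleteLattice α]
    (ε : α → α) (k : α)
    (h1 : ∀ x, ε x = ε (x ⊔ k))
    (h2 : ∃ e : Set.Icc k (⊤ : α) ≃o Set.Icc (⊥ : α) (ε ⊤),
      ∀ x : Set.Icc k (⊤ : α), (e x : α) = ε (x : α))
    (hidem : ε ∘ ε = ε) :
    ∀ a : α, ε a = (a ⊔ k) ⊓ ε ⊤ := by
  obtain ⟨e, he⟩ := h2
  intro a
  apply le_antisymm
  · exact le_inf (LinMor.sup_eq_of_idempotent h1 e he hidem a ▸ le_sup_left)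
      (LinMor.apply_le_apply_top h1 e he a)
  · calc (a ⊔ k) ⊓ ε ⊤ = ε ((a ⊔ k) ⊓ ε ⊤) :=
          (LinMor.apply_eq_self_of_le_apply_top e he hidem inf_le_right).symm
      _ ≤ ε a := (LinMor.apply_le_apply_iff h1 e he _ _).2 (sup_le inf_le_left le_sup_right)

/-- An idempotent linear endomorphism `ε` of a complete modular lattice equals
the projection onto `ε ⊤` along its kernel: `ε a = (a ⊔ ker_ε) ⊓ ε ⊤`. -/
theorem stmt_0 {α : Type*} [CompleteLattice α] [IsModularLattice α]
    (ε : α → α) (k : α)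
    (h1 : ∀ x, ε x = ε (x ⊔ k))
    (h2 : ∃ e : Set.Icc k (⊤ : α) ≃o Set.Icc (⊥ : α) (ε ⊤),
      ∀ x : Set.Icc k (⊤ : α), (e x : α) = ε (x : α))
    (hidem : ε ∘ ε = ε) :
    ∀ a : α, ε a = (a ⊔ k) ⊓ ε ⊤ :=
  stmt_0_general ε k h1 h2 hidem
end

section
/- Let L be a complete modular lattice and 𝔪 a submonoid with zero of End_lin(L) that is closed under complements. For φ ∈ 𝔪 the following are equivalent: (a) ker_φ and φ(⊤) both have complements in L; (b) there exists ψ ∈ 𝔪 such that φ ∘ ψ ∘ φ = φ. Moreover, in that case (ψ∘φ)(⊤) is a complement of ker_φ and ker_{φ∘ψ} is a complement of φ(⊤). -/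
/-! If `φ ∘ ψ ∘ φ = φ`, then `ψ ∘ φ` and `φ ∘ ψ` are idempotent members of `M`, and an idempotent
linear endomorphism splits the lattice into its kernel and its image; `ψ ∘ φ` has the same kernel
as `φ` and `φ ∘ ψ` the same image. Conversely, if `ker φ` has a complement `k'`, modularity (the
diamond isomorphism `[⊥, k'] ≅ [ker φ, ⊤]`) makes `φ` an isomorphism `[⊥, k'] ≅ [⊥, φ ⊤]`; given
also a complement of `φ ⊤`, closure under complements puts the inverse of this isomorphism,
precomposed with the projection onto `φ ⊤`, into `M`, and it is a generalized inverse of `φ`. -/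

namespace IsLinMor

variable {α β : Type*} [CompleteLattice α] [CompleteLattice β] {φ : α → β}

lemma map_eq_bot_iff_of_witness {k : α} (hk : ∀ x, φ x = φ (x ⊔ k))
    (e : Set.Icc k ⊤ ≃o Set.Icc (⊥ : β) (φ ⊤)) (he : ∀ x, (e x : β) = φ x) (a : α) :
    φ a = ⊥ ↔ a ≤ k := by
  have hk_bot : φ k = ⊥ := by
    have : e ⟨k, le_rfl, le_top⟩ ≤ e (e.symm ⟨⊥, le_rfl, bot_le⟩) :=
      e.monotone (e.symm ⟨⊥, le_rfl, bot_le⟩).2.1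
    rw [e.apply_symm_apply, ← Subtype.coe_le_coe, he] at this
    exact le_bot_iff.1 this
  refine ⟨fun ha => ?_, fun ha => by rw [hk, sup_eq_right.2 ha, hk_bot]⟩
  have : e ⟨a ⊔ k, le_sup_right, le_top⟩ = e ⟨k, le_rfl, le_top⟩ :=
    Subtype.ext (by rw [he, he, ← hk, ha, hk_bot])
  exact le_of_sup_eq (congrArg Subtype.val (e.injective this))

lemma linKer_eq_of_witness {k : α} (hk : ∀ x, φ x = φ (x ⊔ k))
    (e : Set.Icc k ⊤ ≃o Set.Icc (⊥ : β) (φ ⊤)) (he : ∀ x, (e x : β) = φ x) :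
    linKer φ = k := by
  simp only [linKer, map_eq_bot_iff_of_witness hk e he]
  exact csSup_Iic

lemma exists_orderIso_linKer (h : IsLinMor φ) :
    (∀ x, φ x = φ (x ⊔ linKer φ)) ∧
      ∃ e : Set.Icc (linKer φ) ⊤ ≃o Set.Icc (⊥ : β) (φ ⊤), ∀ x, (e x : β) = φ x := by
  obtain ⟨k, hk, e, he⟩ := h
  obtain rfl := linKer_eq_of_witness hk e he
  exact ⟨hk, e, he⟩

lemma map_eq_bot_iff (h : IsLinMor φ) (a : α) : φ a = ⊥ ↔ a ≤ linKer φ := by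
  obtain ⟨hk, e, he⟩ := h.exists_orderIso_linKer
  exact map_eq_bot_iff_of_witness hk e he a

lemma map_sup_linKer (h : IsLinMor φ) (x : α) : φ (x ⊔ linKer φ) = φ x :=
  (h.exists_orderIso_linKer.1 x).symm

lemma map_bot (h : IsLinMor φ) : φ ⊥ = ⊥ :=
  (h.map_eq_bot_iff ⊥).2 bot_le

lemma monotone (h : IsLinMor φ) : Monotone φ := by
  obtain ⟨hk, e, he⟩ := h.exists_orderIso_linKer
  intro x y hxy
  have : e ⟨x ⊔ linKer φ, le_sup_right, le_top⟩ ≤ e ⟨y ⊔ linKer φ, le_sup_right, le_top⟩ :=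
    e.monotone (sup_le_sup_right hxy _)
  rwa [← Subtype.coe_le_coe, he, he, ← hk, ← hk] at this

lemma injOn (h : IsLinMor φ) : Set.InjOn φ (Set.Ici (linKer φ)) := by
  obtain ⟨-, e, he⟩ := h.exists_orderIso_linKer
  intro x hx y hy hxy
  have : e ⟨x, hx, le_top⟩ = e ⟨y, hy, le_top⟩ := Subtype.ext (by rw [he, he, hxy])
  exact congrArg Subtype.val (e.injective this)

lemma exists_map_eq (h : IsLinMor φ) {b : β} (hb : b ≤ φ ⊤) : ∃ a, φ a = b := by
  obtain ⟨-, e, he⟩ := h.exists_orderIso_linKer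
  exact ⟨e.symm ⟨b, bot_le, hb⟩, by rw [← he, e.apply_symm_apply]⟩

lemma exists_orderIso_of_isCompl [IsModularLattice α] (h : IsLinMor φ) {k' : α}
    (hk' : IsCompl (linKer φ) k') :
    ∃ e : Set.Icc (⊥ : α) k' ≃o Set.Icc (⊥ : β) (φ ⊤), ∀ a, (e a : β) = φ a := by
  obtain ⟨hk, e, he⟩ := h.exists_orderIso_linKer
  refine ⟨(OrderIso.setCongr _ _ Set.Icc_bot).trans <| hk'.symm.IicOrderIsoIci.trans <|
    (OrderIso.setCongr _ _ Set.Icc_top.symm).trans e, fun a => ?_⟩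
  simp only [OrderIso.trans_apply, he]
  exact (hk a).symm

lemma isCompl_linKer_map_top {ε : α → α} (h : IsLinMor ε) (hε : ∀ a, ε (ε a) = ε a) :
    IsCompl (linKer ε) (ε ⊤) := by
  constructor
  · rw [disjoint_iff]
    obtain ⟨x, hx⟩ := h.exists_map_eq (inf_le_right : linKer ε ⊓ ε ⊤ ≤ ε ⊤)
    have h_fixed : ε (linKer ε ⊓ ε ⊤) = linKer ε ⊓ ε ⊤ := by rw [← hx, hε]
    rw [← h_fixed, (h.map_eq_bot_iff _).2 inf_le_left]
  · rw [codisjoint_iff]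
    refine h.injOn le_sup_left le_top ?_
    rw [sup_comm, h.map_sup_linKer, hε]

end IsLinMor

section Regular

variable {α β : Type*} [CompleteLattice α] [CompleteLattice β] {φ : α → β} {ψ : β → α}

lemma linKer_comp_of_comp_comp_eq (hφ : φ ⊥ = ⊥) (hψ : ψ ⊥ = ⊥) (hreg : φ ∘ ψ ∘ φ = φ) :
    linKer (ψ ∘ φ) = linKer φ := by
  refine congrArg sSup (Set.ext fun a => ⟨fun ha => ?_, fun ha => ?_⟩)
  · change φ a = ⊥
    rw [← congrFun hreg a]
    exact (congrArg φ ha).trans hφ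
  · exact (congrArg ψ ha).trans hψ

lemma comp_map_top_of_comp_comp_eq (hφ : Monotone φ) (hψ : Monotone ψ) (hreg : φ ∘ ψ ∘ φ = φ) :
    (φ ∘ ψ) ⊤ = φ ⊤ :=
  le_antisymm (hφ le_top) (congrFun hreg ⊤ ▸ hφ (hψ le_top))

end Regular

section Submonoid

variable {α : Type*} [CompleteLattice α] {M : Set (α → α)} {φ ψ : α → α}

lemma IsLinSubmonoid.isCompl_linKer_comp_map_top (hM : IsLinSubmonoid M) (hφ : φ ∈ M)
    (hψ : ψ ∈ M) (hreg : φ ∘ ψ ∘ φ = φ) : IsCompl (linKer φ) ((ψ ∘ φ) ⊤) := by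
  rw [← linKer_comp_of_comp_comp_eq (hM.lin_mem φ hφ).map_bot (hM.lin_mem ψ hψ).map_bot hreg]
  exact (hM.lin_mem _ (hM.comp_mem ψ hψ φ hφ)).isCompl_linKer_map_top
    fun a => congrArg ψ (congrFun hreg a)

lemma IsLinSubmonoid.isCompl_map_top_linKer_comp (hM : IsLinSubmonoid M) (hφ : φ ∈ M)
    (hψ : ψ ∈ M) (hreg : φ ∘ ψ ∘ φ = φ) : IsCompl (φ ⊤) (linKer (φ ∘ ψ)) := by
  rw [← comp_map_top_of_comp_comp_eq (hM.lin_mem φ hφ).monotone (hM.lin_mem ψ hψ).monotone hreg]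
  exact ((hM.lin_mem _ (hM.comp_mem φ hφ ψ hψ)).isCompl_linKer_map_top
    fun b => congrFun hreg (ψ b)).symm

lemma ClosedUnderComplements.exists_comp_comp_eq [IsModularLattice α]
    (hcc : ClosedUnderComplements M) (hφ : φ ∈ M) (hφlin : IsLinMor φ) {k' i' : α}
    (hk' : IsCompl (linKer φ) k') (hi' : IsCompl (φ ⊤) i') : ∃ ψ ∈ M, φ ∘ ψ ∘ φ = φ := by
  obtain ⟨e, he⟩ := hφlin.exists_orderIso_of_isCompl hk'
  refine ⟨_, hcc φ hφ k' (linKer φ) (φ ⊤) i' hk'.symm hi' e he, funext fun a => ?_⟩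
  have hproj : (⟨(φ a ⊔ i') ⊓ φ ⊤, bot_le, inf_le_right⟩ : Set.Icc ⊥ (φ ⊤)) =
      ⟨φ a, bot_le, hφlin.monotone le_top⟩ := Subtype.ext <| by
    change (φ a ⊔ i') ⊓ φ ⊤ = φ a
    rw [sup_inf_assoc_of_le i' (hφlin.monotone le_top), hi'.symm.inf_eq_bot, sup_bot_eq]
  change φ (e.symm _ : α) = φ a
  rw [hproj, ← he, e.apply_symm_apply]

end Submonoid

/-- For `φ` in a submonoid with zero `M ⊆ End_lin(L)` closed under complements:
`ker_φ` and `φ ⊤` are complemented iff there is `ψ ∈ M` with `φ ∘ ψ ∘ φ = φ`; moreover, in that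
case `(ψ ∘ φ) ⊤` is a complement of `ker_φ` and `ker_{φ ∘ ψ}` is a complement of `φ ⊤`. -/
theorem stmt_1 {α : Type*} [CompleteLattice α] [IsModularLattice α]
    (M : Set (α → α)) (hM : IsLinSubmonoid M) (hcc : ClosedUnderComplements M)
    (φ : α → α) (hφ : φ ∈ M) :
    (((∃ k', IsCompl (linKer φ) k') ∧ (∃ i', IsCompl (φ ⊤) i')) ↔
      ∃ ψ ∈ M, φ ∘ ψ ∘ φ = φ) ∧
    (∀ ψ ∈ M, φ ∘ ψ ∘ φ = φ →
      IsCompl (linKer φ) ((ψ ∘ φ) ⊤) ∧ IsCompl (φ ⊤) (linKer (φ ∘ ψ))) := by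
  have hcompl : ∀ ψ ∈ M, φ ∘ ψ ∘ φ = φ →
      IsCompl (linKer φ) ((ψ ∘ φ) ⊤) ∧ IsCompl (φ ⊤) (linKer (φ ∘ ψ)) := fun ψ hψ hreg =>
    ⟨hM.isCompl_linKer_comp_map_top hφ hψ hreg, hM.isCompl_map_top_linKer_comp hφ hψ hreg⟩
  refine ⟨⟨fun ⟨⟨k', hk'⟩, ⟨i', hi'⟩⟩ => hcc.exists_comp_comp_eq hφ (hM.lin_mem φ hφ) hk' hi',
    fun ⟨ψ, hψ, hreg⟩ => ?_⟩, hcompl⟩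
  obtain ⟨hker, hrange⟩ := hcompl ψ hψ hreg
  exact ⟨⟨_, hker⟩, ⟨_, hrange⟩⟩
end

section
/- Let L be a complete modular lattice that is compact (⊤ is a compact element of L), let G be a complete lattice, and let φ : L → G be a linear morphism. Then φ(⊤) is a compact element of G. -/
/-! `φ` identifies `[k, ⊤]` with `[⊥, φ ⊤]` as ordered sets, `k` its kernel. Joins in an interval
`[a, b]` are `a ⊔ sSup`, so compactness of `L`, applied to a family together with `k`, makes `⊤`
compact in `[k, ⊤]`. Being the join of a finite subfamily is purely order-theoretic, so the
isomorphism carries this over to `φ ⊤` in `[⊥, φ ⊤]`. -/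

open Set

section IsCompactLUB

variable {P Q : Type*} [PartialOrder P] [PartialOrder Q]

def IsCompactLUB (x : P) : Prop :=
  ∀ s : Set P, IsLUB s x → ∃ t ⊆ s, t.Finite ∧ IsLUB t x

theorem IsCompactLUB.map {x : P} (hx : IsCompactLUB x) (e : P ≃o Q) : IsCompactLUB (e x) := by
  intro s hs
  have hpull : IsLUB (e.symm '' s) x := by
    rwa [e.symm.isLUB_image, OrderIso.symm_symm]
  obtain ⟨t, hts, ht_fin, ht⟩ := hx _ hpull
  refine ⟨e '' t, ?_, ht_fin.image e, e.isLUB_image'.mpr ht⟩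
  simpa only [e.image_symm_image] using image_mono (f := e) hts

end IsCompactLUB

section CompleteLattice

variable {α : Type*} [CompleteLattice α]

theorem isLUB_Icc_iff {a b : α} {s : Set (Icc a b)} {x : Icc a b} :
    IsLUB s x ↔ a ⊔ sSup (Subtype.val '' s) = x := by
  have hsup_le : sSup (Subtype.val '' s) ≤ b := sSup_le (by rintro _ ⟨y, -, rfl⟩; exact y.2.2)
  let m : Icc a b := ⟨a ⊔ sSup (Subtype.val '' s), le_sup_left, sup_le (x.2.1.trans x.2.2) hsup_le⟩
  have hm : IsLUB s m :=
    ⟨fun y hy => le_sup_of_le_right (le_sSup ⟨y, hy, rfl⟩),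
      fun z hz => sup_le z.2.1 (sSup_le (by rintro _ ⟨y, hy, rfl⟩; exact hz hy))⟩
  exact ⟨fun h => congrArg Subtype.val (hm.unique h), fun h => by
    convert hm; exact Subtype.ext h.symm⟩

theorem CompactLat.isCompactLUB_top_Icc (h : CompactLat α) (a : α) :
    IsCompactLUB (⟨⊤, le_top, le_rfl⟩ : Icc a ⊤) := by
  intro s hs
  rw [isLUB_Icc_iff, ← sSup_insert] at hs
  obtain ⟨t, hts, ht⟩ := h _ hs
  refine ⟨Subtype.val ⁻¹' t ∩ s, inter_subset_right,
    (t.finite_toSet.preimage Subtype.val_injective.injOn).inter_of_left s, ?_⟩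
  rw [isLUB_Icc_iff]
  refine top_le_iff.mp (ht.symm.trans_le (sSup_le fun y hy => ?_))
  obtain rfl | ⟨z, hz, rfl⟩ := hts hy
  · exact le_sup_left
  · exact le_sup_of_le_right (le_sSup ⟨z, ⟨hy, hz⟩, rfl⟩)

theorem CompactElt.of_isCompactLUB {c : α} (h : IsCompactLUB (⟨c, bot_le, le_rfl⟩ : Icc ⊥ c)) :
    CompactElt c := by
  intro s hsc hs
  have himage : Subtype.val '' (Subtype.val ⁻¹' s : Set (Icc ⊥ c)) = s := by
    rw [Subtype.image_preimage_coe]; exact inter_eq_right.mpr fun a ha => ⟨bot_le, hsc a ha⟩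
  obtain ⟨T, hTs, hT_fin, hT⟩ :=
    h (Subtype.val ⁻¹' s) (by rw [isLUB_Icc_iff, himage, bot_sup_eq, hs])
  rw [isLUB_Icc_iff, bot_sup_eq] at hT
  refine ⟨(hT_fin.image Subtype.val).toFinset, ?_, ?_⟩
  · rw [Finite.coe_toFinset, ← himage]; exact image_mono hTs
  · rwa [Finite.coe_toFinset]

end CompleteLattice

theorem stmt_5_general {α β : Type*} [CompleteLattice α] [CompleteLattice β]
    (hcomp : CompactLat α) (φ : α → β) (hφ : IsLinMor φ) :
    CompactElt (φ ⊤) := by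
  obtain ⟨k, -, e, he⟩ := hφ
  have htop : e ⟨⊤, le_top, le_rfl⟩ = ⟨φ ⊤, bot_le, le_rfl⟩ := Subtype.ext (he _)
  apply CompactElt.of_isCompactLUB
  rw [← htop]
  exact (hcomp.isCompactLUB_top_Icc k).map e

/-- If `L` is a complete compact modular lattice and `φ : L → G` is a linear
morphism into a complete lattice `G`, then `φ ⊤` is a compact element of `G`. -/
theorem stmt_5 {α β : Type*} [CompleteLattice α] [IsModularLattice α] [CompleteLattice β]
    (hcomp : CompactLat α) (φ : α → β) (hφ : IsLinMor φ) :
    CompactElt (φ ⊤) :=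
  stmt_5_general hcomp φ hφ
end

section
/- Let L be a complete compact modular lattice and 𝔪 a submonoid with zero of End_lin(L) that is closed under complements. The following are equivalent: (a) every compact element of L has a complement in L (L is von Neumann regular); (b) L is dual-𝔪-Rickart and every compact element of L is 𝔪-L-generated. -/
/-!
(a) ⇒ (b): for a linear `φ`, `[⊥, φ ⊤]` is isomorphic to the upper interval `[ker φ, ⊤]` of the
compact lattice `L`, so `φ ⊤` is compact, hence complemented; and a complemented `c` is the image
of the projection `π_c`, which lies in `M` by closure under complements applied to `id`.

(b) ⇒ (a): a compact `c` is a finite join of images `φᵢ ⊤` with `φᵢ ∈ M`. If `x` has a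
complement `x'` and `φ ∈ M`, then by modularity `x ⊔ φ ⊤ = x ⊔ z` with `z = π_{x'} (φ ⊤)`, the
image of `π_{x'} ∘ φ ∈ M`; dual Rickartness gives a complement `z'` of `z`, and `x' ⊓ z'`
complements `x ⊔ φ ⊤`. Induction on the finite join finishes the proof.
-/

section VonNeumannRegular

variable {α β : Type*} [CompleteLattice α]

theorem CompactLat.compactElt_of_orderIso_Icc [CompleteLattice β] (hα : CompactLat α)
    {k : α} {c : β} (e : Set.Icc k ⊤ ≃o Set.Icc ⊥ c) : CompactElt c := by
  classical
  let up : β → α := fun a => e.symm ⟨a ⊓ c, bot_le, inf_le_right⟩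
  let down : α → β := fun b => e ⟨b ⊔ k, le_sup_right, le_top⟩
  have up_mono : Monotone up := fun a b hab =>
    e.symm.monotone (Subtype.mk_le_mk.mpr (inf_le_inf_right c hab))
  have down_mono : Monotone down := fun a b hab =>
    e.monotone (Subtype.mk_le_mk.mpr (sup_le_sup_right hab k))
  have k_le_up (a : β) : k ≤ up a := (e.symm _).2.1
  have down_up {a : β} (ha : a ≤ c) : down (up a) = a := by
    have : (⟨up a ⊔ k, le_sup_right, le_top⟩ : Set.Icc k ⊤) =
        e.symm ⟨a ⊓ c, bot_le, inf_le_right⟩ :=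
      Subtype.ext (sup_eq_left.mpr (k_le_up a))
    simp only [down, this, OrderIso.apply_symm_apply, inf_eq_left.mpr ha]
  have up_down (b : α) : up (down b) = b ⊔ k := by
    have : (⟨down b ⊓ c, bot_le, inf_le_right⟩ : Set.Icc ⊥ c) = e ⟨b ⊔ k, le_sup_right, le_top⟩ :=
      Subtype.ext (inf_eq_left.mpr (e _).2.2)
    simp only [up, this, OrderIso.symm_apply_apply]
  have down_le (b : α) : down b ≤ c := (e _).2.2
  have down_top : down ⊤ = c := le_antisymm (down_le ⊤) (down_up le_rfl ▸ down_mono le_top)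
  have up_c : up c = ⊤ := by rw [← down_top, up_down, top_sup_eq]
  intro s hs hsup
  have hlift : sSup (insert k (up '' s)) = ⊤ := by
    set u := sSup (insert k (up '' s))
    have hcu : c ≤ down u := hsup ▸ sSup_le fun a ha =>
      down_up (hs a ha) ▸ down_mono (le_sSup (Set.mem_insert_of_mem _ ⟨a, ha, rfl⟩))
    calc u = up (down u) := by rw [up_down, sup_eq_left.mpr (le_sSup (Set.mem_insert _ _))]
      _ = ⊤ := by rw [le_antisymm (down_le u) hcu, up_c]
  obtain ⟨t, hts, ht⟩ := hα _ hlift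
  have hts' : ↑(t.erase k) ⊆ up '' s := by
    rw [Finset.coe_erase, Set.sdiff_subset_iff, ← Set.insert_eq]
    exact hts
  obtain ⟨t₀, ht₀s, ht₀⟩ := Finset.subset_set_image_iff.mp hts'
  refine ⟨t₀, ht₀s, ?_⟩
  have hup : up (sSup t₀) = ⊤ := top_unique <| ht ▸ sSup_le fun x hx => by
    by_cases hxk : x = k
    · exact hxk ▸ k_le_up _
    · obtain ⟨a, ha, rfl⟩ := Finset.mem_image.mp (ht₀ ▸ Finset.mem_erase.mpr ⟨hxk, hx⟩)
      exact up_mono (le_sSup ha)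
  calc sSup (t₀ : Set β) = down (up (sSup t₀)) :=
        (down_up (sSup_le fun a ha => hs a (ht₀s ha))).symm
    _ = c := by rw [hup, down_top]

theorem IsLinMor.compactElt_map_top [CompleteLattice β] (hα : CompactLat α) {φ : α → β}
    (hφ : IsLinMor φ) : CompactElt (φ ⊤) := by
  obtain ⟨k, -, e, -⟩ := hφ
  exact hα.compactElt_of_orderIso_Icc e

theorem ClosedUnderComplements.proj_mem {M : Set (α → α)} (hcc : ClosedUnderComplements M)
    (hid : id ∈ M) {x x' : α} (h : IsCompl x x') : proj x x' ∈ M :=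
  hcc id hid x x' x x' h h (OrderIso.refl _) fun _ => rfl

theorem mGenerated_of_isCompl {M : Set (α → α)} (hcc : ClosedUnderComplements M)
    (hid : id ∈ M) {c c' : α} (h : IsCompl c c') : MGenerated M c :=
  ⟨{proj c c'}, Set.singleton_subset_iff.mpr (hcc.proj_mem hid h),
    by simp [proj], by simp [proj]⟩

theorem IsCompl.isCompl_sup_of_isCompl_proj [IsModularLattice α] {x x' y z' : α} (h : IsCompl x x')
    (hz : IsCompl (proj x' x y) z') : IsCompl (x ⊔ y) (x' ⊓ z') := by
  set z := proj x' x y with hz_def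
  have hzx' : z ≤ x' := inf_le_right
  have hxz : x ⊔ y = x ⊔ z := by
    rw [hz_def, proj, inf_comm, ← sup_inf_assoc_of_le x' le_sup_right, h.sup_eq_top, top_inf_eq,
      sup_comm]
  have hxz_x' : (x ⊔ z) ⊓ x' = z := by
    rw [inf_comm, ← inf_sup_assoc_of_le x hzx', h.symm.inf_eq_bot, bot_sup_eq]
  have hx'z' : x' ⊓ z' ⊔ z = x' := by
    rw [inf_sup_assoc_of_le z' hzx', hz.symm.sup_eq_top, inf_top_eq]
  refine IsCompl.of_eq ?_ ?_
  · rw [hxz, ← inf_assoc, hxz_x', hz.inf_eq_bot]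
  · rw [hxz, sup_assoc, sup_comm z, hx'z', h.sup_eq_top]

section Submonoid

variable [IsModularLattice α] {M : Set (α → α)}

theorem MDualRickart.exists_isCompl_sup_map_top (hdr : MDualRickart M) (hM : IsLinSubmonoid M)
    (hcc : ClosedUnderComplements M) {x x' : α} (h : IsCompl x x') {φ : α → α} (hφ : φ ∈ M) :
    ∃ w, IsCompl (x ⊔ φ ⊤) w := by
  obtain ⟨z', hz⟩ := hdr _ (hM.comp_mem _ (hcc.proj_mem hM.id_mem h.symm) _ hφ)
  exact ⟨_, h.isCompl_sup_of_isCompl_proj hz⟩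

theorem MDualRickart.exists_isCompl_sSup (hdr : MDualRickart M) (hM : IsLinSubmonoid M)
    (hcc : ClosedUnderComplements M) (t : Finset α) (ht : ↑t ⊆ (fun φ => φ ⊤) '' M) :
    ∃ w, IsCompl (sSup (t : Set α)) w := by
  classical
  induction t using Finset.induction_on with
  | empty => exact ⟨⊤, by simpa using isCompl_bot_top⟩
  | insert a t _ ih =>
    rw [Finset.coe_insert, Set.insert_subset_iff] at ht
    obtain ⟨w, hw⟩ := ih ht.2
    obtain ⟨φ, hφ, rfl⟩ := ht.1
    rw [Finset.coe_insert, sSup_insert, sup_comm]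
    exact hdr.exists_isCompl_sup_map_top hM hcc hw hφ

theorem CompactElt.exists_isCompl_of_mGenerated (hdr : MDualRickart M) (hM : IsLinSubmonoid M)
    (hcc : ClosedUnderComplements M) {c : α} (hc : CompactElt c) (hgen : MGenerated M c) :
    ∃ c', IsCompl c c' := by
  obtain ⟨S, hSM, hSc, hSsup⟩ := hgen
  obtain ⟨t, hts, rfl⟩ := hc ((fun f => f ⊤) '' S) (by simpa using fun f hf => hSc f hf ⊤)
    (by rwa [sSup_image])
  exact hdr.exists_isCompl_sSup hM hcc t (hts.trans (Set.image_mono hSM))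

end Submonoid

end VonNeumannRegular

/-- For a complete compact modular lattice `L` and a submonoid with zero
`M ⊆ End_lin(L)` closed under complements: every compact element of `L` has a complement
(von Neumann regularity) iff `L` is dual-`M`-Rickart and every compact element is
`M`-`L`-generated. -/
theorem stmt_6 {α : Type*} [CompleteLattice α] [IsModularLattice α]
    (hcomp : CompactLat α)
    (M : Set (α → α)) (hM : IsLinSubmonoid M) (hcc : ClosedUnderComplements M) :
    (∀ c : α, CompactElt c → ∃ c', IsCompl c c') ↔
      (MDualRickart M ∧ ∀ c : α, CompactElt c → MGenerated M c) := by
  constructor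
  · intro hreg
    refine ⟨fun φ hφ => hreg _ ((hM.lin_mem φ hφ).compactElt_map_top hcomp), fun c hc => ?_⟩
    obtain ⟨c', hc'⟩ := hreg c hc
    exact mGenerated_of_isCompl hcc hM.id_mem hc'
  · rintro ⟨hdr, hgen⟩ c hc
    exact hc.exists_isCompl_of_mGenerated hdr hM hcc (hgen c hc)
end

section
/- Let R be a ring and M a left R-module such that End_R(M) is a von Neumann regular ring in which every idempotent is central (M is abelian endoregular). Then M is Hopfian and cohopfian: every injective endomorphism of M is an automorphism, and every surjective endomorphism of M is an automorphism. -/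
/-!
If `f * g * f = f`, then `f * g` and `g * f` are idempotents. When they are central, `f` commutes
with them, so `f * (f * g) = f` and `(g * f) * f = f`: cancelling `f` on the left, respectively on
the right, shows that `g` is a two-sided inverse of any `f` that is left, respectively right,
cancellable. For endomorphisms, injective maps are left cancellable and surjective maps are right
cancellable.
-/

section Monoid

variable {S : Type*} [Monoid S] {f g : S}

theorem isIdempotentElem_mul_of_mul_mul_self (h : f * g * f = f) : IsIdempotentElem (f * g) := by
  rw [IsIdempotentElem, ← mul_assoc, h]

theorem isIdempotentElem_mul_of_mul_mul_self' (h : f * g * f = f) : IsIdempotentElem (g * f) := by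
  rw [IsIdempotentElem, mul_assoc, ← mul_assoc f, h]

theorem isUnit_of_isLeftRegular_of_mul_mul_self (h : f * g * f = f) (hc : Commute (f * g) f)
    (hf : IsLeftRegular f) : IsUnit f := by
  have hfg : f * g = 1 := hf.mul_left_eq_self_iff.1 <| by rw [← hc.eq, h]
  have hgf : g * f = 1 := hf.mul_left_eq_self_iff.1 <| by rw [← mul_assoc, h]
  exact ⟨⟨f, g, hfg, hgf⟩, rfl⟩

theorem isUnit_of_isRightRegular_of_mul_mul_self (h : f * g * f = f) (hc : Commute (g * f) f)
    (hf : IsRightRegular f) : IsUnit f := by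
  have hgf : g * f = 1 := hf.mul_right_eq_self_iff.1 <| by rw [hc.eq, ← mul_assoc, h]
  have hfg : f * g = 1 := hf.mul_right_eq_self_iff.1 h
  exact ⟨⟨f, g, hfg, hgf⟩, rfl⟩

end Monoid

/-- If `End_R(M)` is a von Neumann regular ring whose idempotents are all
central (i.e. `M` is abelian endoregular), then `M` is Hopfian and cohopfian. -/
theorem stmt_13 {R M : Type*} [Ring R] [AddCommGroup M] [Module R M]
    (hreg : ∀ f : M →ₗ[R] M, ∃ g : M →ₗ[R] M, f ∘ₗ g ∘ₗ f = f)
    (hab : ∀ e : M →ₗ[R] M, e ∘ₗ e = e → ∀ f : M →ₗ[R] M, e ∘ₗ f = f ∘ₗ e) :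
    (∀ f : M →ₗ[R] M, Function.Injective f → Function.Bijective f) ∧
    (∀ f : M →ₗ[R] M, Function.Surjective f → Function.Bijective f) := by
  refine ⟨fun f hf => ?_, fun f hf => ?_⟩ <;>
    obtain ⟨g, hg⟩ := hreg f <;> rw [← Module.End.isUnit_iff]
  · exact isUnit_of_isLeftRegular_of_mul_mul_self hg
      (hab _ (isIdempotentElem_mul_of_mul_mul_self hg) f) fun _ _ => (LinearMap.cancel_left hf).1
  · exact isUnit_of_isRightRegular_of_mul_mul_self hg
      (hab _ (isIdempotentElem_mul_of_mul_mul_self' hg) f) fun _ _ => (LinearMap.cancel_right hf).1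
end

section
/- Let L be an upper-continuous complete modular lattice and let {a_i}_{i∈I} be an independent family of elements of L with ⨆_{i∈I} a_i = ⊤. Suppose each a_i decomposes as a_i = b_i ⊔ c_i with b_i ⊓ c_i = ⊥. Then ⨆_{i∈I} b_i is a complement of ⨆_{i∈I} c_i in L, i.e., (⨆ b_i) ⊓ (⨆ c_i) = ⊥ and (⨆ b_i) ⊔ (⨆ c_i) = ⊤. -/
/-
Each element of the finite subjoin `⨆_{i ∈ s} (b i ⊔ c i)` splits off one summand at a time, and
modularity keeps the `b`-part disjoint from the `c`-part at each step; so `⨆_{i ∈ s} b i` and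
`⨆_{i ∈ s} c i` are disjoint for every finite `s`. The full joins are directed joins of these
finite subjoins, and upper continuity carries disjointness to directed joins. The join of the two
is `⨆ (b i ⊔ c i) = ⨆ a i = ⊤`.
-/

def UpperContinuous (α : Type*) [CompleteLattice α] : Prop :=
  ∀ a : α, ∀ D : Set α, DirectedOn (· ≤ ·) D → a ⊓ sSup D = ⨆ d ∈ D, a ⊓ d

section Modular

variable {α : Type*} [Lattice α] [OrderBot α] [IsModularLattice α]

theorem Disjoint.sup_sup_of_disjoint_sup {b c b' c' : α} (h : Disjoint b c) (h' : Disjoint b' c')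
    (hsup : Disjoint (b ⊔ c) (b' ⊔ c')) : Disjoint (b ⊔ b') (c ⊔ c') := by
  have hb : Disjoint b (c ⊔ (b' ⊔ c')) := h.disjoint_sup_right_of_disjoint_sup_left hsup
  have hb' : Disjoint b' (c' ⊔ c) :=
    h'.disjoint_sup_right_of_disjoint_sup_left (hsup.symm.mono_right le_sup_right)
  refine Disjoint.disjoint_sup_left_of_disjoint_sup_right ?_ (hb.mono_right ?_)
  · exact hb'.mono_right (sup_comm c c').le
  · exact sup_le (le_sup_of_le_right le_sup_left) (sup_le_sup_left le_sup_right c)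

theorem Finset.SupIndep.disjoint_sup_sup_of_disjoint {ι : Type*} {s : Finset ι} {b c : ι → α}
    (hs : s.SupIndep (b ⊔ c)) (hbc : ∀ i, Disjoint (b i) (c i)) :
    Disjoint (s.sup b) (s.sup c) := by
  induction s using Finset.cons_induction with
  | empty => simp
  | cons j s hj ih =>
    have hsplit : Disjoint (b j ⊔ c j) (s.sup b ⊔ s.sup c) := by
      rw [← Finset.sup_sup]
      exact hs (Finset.subset_cons hj) (Finset.mem_cons_self j s) hj
    rw [Finset.sup_cons, Finset.sup_cons]
    exact (hbc j).sup_sup_of_disjoint_sup (ih (hs.subset (Finset.subset_cons hj))) hsplit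

end Modular

section UpperContinuous

variable {α : Type*} [CompleteLattice α]

theorem UpperContinuous.disjoint_iSup {κ : Type*} (hUC : UpperContinuous α) {x : α}
    {f : κ → α} (hf : Directed (· ≤ ·) f) (h : ∀ k, Disjoint x (f k)) :
    Disjoint x (⨆ k, f k) := by
  rw [disjoint_iff, iSup, hUC x _ hf.directedOn_range, iSup_range]
  exact iSup_eq_bot.mpr fun k => (h k).eq_bot

theorem UpperContinuous.disjoint_iSup_iSup {κ : Type*} [Preorder κ] [IsDirectedOrder κ]
    (hUC : UpperContinuous α) {f g : κ → α} (hf : Monotone f) (hg : Monotone g)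
    (h : ∀ k, Disjoint (f k) (g k)) : Disjoint (⨆ k, f k) (⨆ k, g k) :=
  hUC.disjoint_iSup hg.directed_le fun l =>
    (hUC.disjoint_iSup hf.directed_le fun k =>
      have ⟨m, hkm, hlm⟩ := exists_ge_ge k l
      ((h m).mono (hf hkm) (hg hlm)).symm).symm

theorem iSupIndep.disjoint_iSup_iSup_of_upperContinuous [IsModularLattice α] {ι : Type*}
    (hUC : UpperContinuous α) {b c : ι → α} (h : iSupIndep (b ⊔ c))
    (hbc : ∀ i, Disjoint (b i) (c i)) : Disjoint (⨆ i, b i) (⨆ i, c i) := by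
  classical
  simp only [iSup_eq_iSup_finset b, iSup_eq_iSup_finset c, ← Finset.sup_eq_iSup]
  exact hUC.disjoint_iSup_iSup (fun _ _ => Finset.sup_mono) (fun _ _ => Finset.sup_mono)
    fun s => (h.supIndep' s).disjoint_sup_sup_of_disjoint hbc

end UpperContinuous

/-- In an upper-continuous complete modular lattice, if `{a i}` is an
independent family joining to `⊤` and each `a i = b i ⊔ c i` with `b i ⊓ c i = ⊥`, then
`⨆ b i` is a complement of `⨆ c i`. -/
theorem stmt_14 {α ι : Type*} [CompleteLattice α] [IsModularLattice α]
    (hUC : ∀ a : α, ∀ D : Set α, DirectedOn (· ≤ ·) D → a ⊓ sSup D = ⨆ d ∈ D, a ⊓ d)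
    (a b c : ι → α)
    (hind : ∀ j, a j ⊓ (⨆ i, ⨆ (_ : i ≠ j), a i) = ⊥)
    (htop : ⨆ i, a i = ⊤)
    (hdecsup : ∀ i, b i ⊔ c i = a i) (hdecinf : ∀ i, b i ⊓ c i = ⊥) :
    (⨆ i, b i) ⊓ (⨆ i, c i) = ⊥ ∧ (⨆ i, b i) ⊔ (⨆ i, c i) = ⊤ := by
  have hdec : b ⊔ c = a := funext hdecsup
  have hindep : iSupIndep (b ⊔ c) := hdec ▸ fun j => disjoint_iff.mpr (hind j)
  refine ⟨?_, ?_⟩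
  · exact (hindep.disjoint_iSup_iSup_of_upperContinuous hUC
      fun i => disjoint_iff.mpr (hdecinf i)).eq_bot
  · rw [← iSup_sup_eq, ← htop]
    exact iSup_congr hdecsup
end
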